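/- arXiv:math-ph/0608035 — 3 statements merged into one kernel-verified Lean document; each statement's English description precedes it below -/
import Mathlib

section
/- For μ ∈ (−1, −1/2) and y > 0, r_μ(y) = y² ∫_0^1 e^{−yτ^μ} τ^{2μ} dτ satisfies r_μ(y) = (1/|μ|) y^{1/|μ|} ∫_y^∞ e^{−τ} τ^{1 − 1/|μ|} dτ, and hence 0 ≤ r_μ(y) ≤ (Γ(2 − 1/|μ|)/|μ|) y^{1/|μ|}. -/
/-!
The substitution `t = y τ ^ μ` maps `(0, 1)` decreasingly onto `(y, ∞)` with
`dt = |μ| y τ ^ (μ - 1) dτ`, and for the exponent `1 - 1/|μ| = 1 + 1/μ` it turns the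
upper incomplete Gamma integral into `y ^ (2 - 1/|μ|) |μ| ∫₀¹ e^{-y τ^μ} τ^{2μ} dτ`.
The bound then comes from enlarging `(y, ∞)` to `(0, ∞)`, which gives `Γ(2 - 1/|μ|)`
as soon as `2 - 1/|μ| > 0`, i.e. `μ < -1/2`.
-/

open Real MeasureTheory Set

lemma image_Ioo_mul_rpow_of_neg {μ y : ℝ} (hμ : μ < 0) (hy : 0 < y) :
    (fun τ => y * τ ^ μ) '' Ioo 0 1 = Ioi y := by
  ext t
  constructor
  · rintro ⟨τ, hτ, rfl⟩
    have : 1 < τ ^ μ := (one_lt_rpow_iff_of_pos hτ.1).mpr (Or.inr ⟨hτ.2, hμ⟩)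
    simpa using mul_lt_mul_of_pos_left this hy
  · intro (ht : y < t)
    have hty : 1 < t / y := (one_lt_div hy).mpr ht
    refine ⟨(t / y) ^ μ⁻¹,
      ⟨by positivity, rpow_lt_one_of_one_lt_of_neg hty (inv_lt_zero.mpr hμ)⟩, ?_⟩
    change y * ((t / y) ^ μ⁻¹) ^ μ = t
    rw [← rpow_mul (by linarith), inv_mul_cancel₀ hμ.ne, rpow_one]
    field_simp

lemma integral_Ioi_eq_integral_comp_mul_rpow {μ y : ℝ} (hμ : μ < 0) (hy : 0 < y)
    (g : ℝ → ℝ) :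
    ∫ t in Ioi y, g t = |μ| * y * ∫ τ in (0:ℝ)..1, τ ^ (μ - 1) * g (y * τ ^ μ) := by
  have hderiv : ∀ τ ∈ Ioo (0:ℝ) 1,
      HasDerivWithinAt (fun τ => y * τ ^ μ) (y * (μ * τ ^ (μ - 1))) (Ioo 0 1) τ :=
    fun τ hτ => ((hasDerivAt_rpow_const (Or.inl hτ.1.ne')).const_mul y).hasDerivWithinAt
  have hinj : InjOn (fun τ => y * τ ^ μ) (Ioo 0 1) := StrictAntiOn.injOn fun a ha b _ hab =>
    mul_lt_mul_of_pos_left (rpow_lt_rpow_of_neg ha.1 hab hμ) hy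
  rw [← image_Ioo_mul_rpow_of_neg hμ hy,
    integral_image_eq_integral_abs_deriv_smul measurableSet_Ioo hderiv hinj,
    intervalIntegral.integral_of_le zero_le_one, integral_Ioc_eq_integral_Ioo,
    ← integral_const_mul]
  refine setIntegral_congr_fun measurableSet_Ioo fun τ hτ => ?_
  simp only [smul_eq_mul, abs_mul, abs_of_pos hy, abs_of_pos (rpow_pos_of_pos hτ.1 _)]
  ring

lemma setIntegral_Ioi_exp_neg_mul_rpow_le_Gamma {s y : ℝ} (hs : 0 < s) (hy : 0 ≤ y) :
    ∫ t in Ioi y, exp (-t) * t ^ (s - 1) ≤ Gamma s := by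
  rw [Gamma_eq_integral hs]
  refine setIntegral_mono_set (GammaIntegral_convergent hs) ?_ (Ioi_subset_Ioi hy).eventuallyLE
  filter_upwards [ae_restrict_mem measurableSet_Ioi] with t (ht : 0 < t)
  positivity

lemma sq_mul_integral_exp_neg_mul_rpow_eq {μ y : ℝ} (hμ : μ < 0) (hy : 0 < y) :
    (y ^ 2 * ∫ τ in (0:ℝ)..1, exp (-y * τ ^ μ) * τ ^ (2 * μ)) =
      (1 / |μ|) * y ^ (1 / |μ|) * ∫ t in Ioi y, exp (-t) * t ^ (1 - 1 / |μ|) := by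
  have hμ_abs : 0 < |μ| := abs_pos.mpr hμ.ne
  have hexp : μ * (1 - 1 / |μ|) + (μ - 1) = 2 * μ := by
    rw [abs_of_neg hμ]; field_simp [hμ.ne]; ring
  have hsubst : ∫ τ in (0:ℝ)..1,
        τ ^ (μ - 1) * (exp (-(y * τ ^ μ)) * (y * τ ^ μ) ^ (1 - 1 / |μ|)) =
      y ^ (1 - 1 / |μ|) * ∫ τ in (0:ℝ)..1, exp (-y * τ ^ μ) * τ ^ (2 * μ) := by
    rw [← intervalIntegral.integral_const_mul]
    refine intervalIntegral.integral_congr_ae (.of_forall fun τ hτ => ?_)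
    rw [uIoc_of_le zero_le_one] at hτ
    have hτμ : 0 < τ ^ μ := rpow_pos_of_pos hτ.1 μ
    rw [mul_rpow hy.le hτμ.le, ← rpow_mul hτ.1.le, mul_comm (τ ^ (μ - 1)), neg_mul,
      ← hexp, rpow_add hτ.1]
    ring
  have hy_pow : y ^ (1 / |μ|) * y ^ (1 - 1 / |μ|) = y := by
    rw [← rpow_add hy]; norm_num
  calc y ^ 2 * ∫ τ in (0:ℝ)..1, exp (-y * τ ^ μ) * τ ^ (2 * μ)
      = y ^ (1 / |μ|) * y ^ (1 - 1 / |μ|) * y *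
          ∫ τ in (0:ℝ)..1, exp (-y * τ ^ μ) * τ ^ (2 * μ) := by
        rw [hy_pow]; ring
    _ = _ := by
        rw [integral_Ioi_eq_integral_comp_mul_rpow hμ hy, hsubst]
        field_simp

theorem r_mu_repr_and_bound_general (μ : ℝ) (hμ₂ : μ < -(1/2 : ℝ))
    (y : ℝ) (hy : 0 < y) :
    (y ^ 2 * ∫ τ in (0:ℝ)..1, Real.exp (-y * τ ^ μ) * τ ^ (2 * μ)) =
      (1 / |μ|) * y ^ (1 / |μ|) *
        ∫ τ in Set.Ioi y, Real.exp (-τ) * τ ^ (1 - 1 / |μ|) ∧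
    0 ≤ y ^ 2 * ∫ τ in (0:ℝ)..1, Real.exp (-y * τ ^ μ) * τ ^ (2 * μ) ∧
    y ^ 2 * (∫ τ in (0:ℝ)..1, Real.exp (-y * τ ^ μ) * τ ^ (2 * μ)) ≤
      (Real.Gamma (2 - 1 / |μ|) / |μ|) * y ^ (1 / |μ|) := by
  have hμ : μ < 0 := by linarith
  have hrepr := sq_mul_integral_exp_neg_mul_rpow_eq hμ hy
  have hI : 0 ≤ ∫ τ in (0:ℝ)..1, exp (-y * τ ^ μ) * τ ^ (2 * μ) :=
    intervalIntegral.integral_nonneg zero_le_one fun τ hτ => by have := hτ.1; positivity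
  have hs : 0 < 2 - 1 / |μ| := by
    rw [abs_of_neg hμ, sub_pos, div_lt_iff₀ (by linarith)]
    linarith
  refine ⟨hrepr, by positivity, ?_⟩
  calc _ = (1 / |μ|) * y ^ (1 / |μ|) * ∫ t in Ioi y, exp (-t) * t ^ (2 - 1 / |μ| - 1) := by
        rw [hrepr, show (2:ℝ) - 1 / |μ| - 1 = 1 - 1 / |μ| by ring]
    _ ≤ (1 / |μ|) * y ^ (1 / |μ|) * Gamma (2 - 1 / |μ|) := by
        gcongr
        exact setIntegral_Ioi_exp_neg_mul_rpow_le_Gamma hs hy.le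
    _ = _ := by ring

theorem r_mu_repr_and_bound (μ : ℝ) (hμ₁ : -1 < μ) (hμ₂ : μ < -(1/2 : ℝ))
    (y : ℝ) (hy : 0 < y) :
    (y ^ 2 * ∫ τ in (0:ℝ)..1, Real.exp (-y * τ ^ μ) * τ ^ (2 * μ)) =
      (1 / |μ|) * y ^ (1 / |μ|) *
        ∫ τ in Set.Ioi y, Real.exp (-τ) * τ ^ (1 - 1 / |μ|) ∧
    0 ≤ y ^ 2 * ∫ τ in (0:ℝ)..1, Real.exp (-y * τ ^ μ) * τ ^ (2 * μ) ∧
    y ^ 2 * (∫ τ in (0:ℝ)..1, Real.exp (-y * τ ^ μ) * τ ^ (2 * μ)) ≤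
      (Real.Gamma (2 - 1 / |μ|) / |μ|) * y ^ (1 / |μ|) :=
  r_mu_repr_and_bound_general μ hμ₂ y hy
end

section
/- For s > 1 and all x ∈ [0,1], Δ(x) = (1+x)^s − 1 − x^s − 2^{s−1} s (x + x^{s−1}) ≤ 0; equivalently, for 0 ≤ y₁ ≤ y₂, (y₁+y₂)^s − y₁^s − y₂^s ≤ 2^{s−1} s (y₁^{s−1} y₂ + y₂^{s−1} y₁). -/
/-!
Write `b = y₁ + y₂`. Convexity of `t ↦ t ^ s` puts `b ^ s` below `y₂ ^ s` plus the tangent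
correction `s b^(s-1) y₁`, and `b ≤ 2 y₂` bounds that correction by `2^(s-1) s y₂^(s-1) y₁`.
The one-variable form is the case `y₁ = x`, `y₂ = 1`.
-/

open Real

lemma rpow_add_mul_sub_le_rpow {p a b : ℝ} (hp : 1 ≤ p) (ha : 0 ≤ a) (hb : 0 < b) :
    b ^ p + p * b ^ (p - 1) * (a - b) ≤ a ^ p := by
  have ht : -1 ≤ (a - b) / b := by
    rw [le_div_iff₀ hb]
    linarith
  have bernoulli := one_add_mul_self_le_rpow_one_add ht hp
  have hab : 1 + (a - b) / b = a / b := by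
    field_simp
    ring
  rw [hab, div_rpow ha hb.le, le_div_iff₀ (rpow_pos_of_pos hb p)] at bernoulli
  calc b ^ p + p * b ^ (p - 1) * (a - b) = (1 + p * ((a - b) / b)) * b ^ p := by
        rw [rpow_sub_one hb.ne']
        field_simp
    _ ≤ a ^ p := bernoulli

lemma add_rpow_sub_rpow_sub_rpow_le {s y₁ y₂ : ℝ} (hs : 1 ≤ s) (hy₁ : 0 ≤ y₁) (h : y₁ ≤ y₂) :
    (y₁ + y₂) ^ s - y₁ ^ s - y₂ ^ s ≤
      2 ^ (s - 1) * s * (y₁ ^ (s - 1) * y₂ + y₂ ^ (s - 1) * y₁) := by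
  rcases (hy₁.trans h).eq_or_lt with hy₂ | hy₂
  · obtain rfl : y₁ = 0 := le_antisymm (hy₂ ▸ h) hy₁
    subst hy₂
    simp [zero_rpow (by linarith : s ≠ 0)]
  have tangent := rpow_add_mul_sub_le_rpow hs hy₂.le (by linarith : 0 < y₁ + y₂)
  have hb : (y₁ + y₂) ^ (s - 1) ≤ 2 ^ (s - 1) * y₂ ^ (s - 1) := by
    rw [← mul_rpow zero_le_two hy₂.le]
    exact rpow_le_rpow (by linarith) (by linarith) (by linarith)
  have hy₁s : 0 ≤ y₁ ^ s := rpow_nonneg hy₁ s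
  have hcross : 0 ≤ 2 ^ (s - 1) * s * (y₁ ^ (s - 1) * y₂) := by positivity
  linarith [mul_le_mul_of_nonneg_left hb (by positivity : 0 ≤ s * y₁)]

theorem Delta_nonpos (s : ℝ) (hs : 1 < s) :
    (∀ x : ℝ, x ∈ Set.Icc (0:ℝ) 1 →
      (1 + x) ^ s - 1 - x ^ s - 2 ^ (s - 1) * s * (x + x ^ (s - 1)) ≤ 0) ∧
    (∀ y₁ y₂ : ℝ, 0 ≤ y₁ → y₁ ≤ y₂ →
      (y₁ + y₂) ^ s - y₁ ^ s - y₂ ^ s ≤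
        2 ^ (s - 1) * s * (y₁ ^ (s - 1) * y₂ + y₂ ^ (s - 1) * y₁)) := by
  refine ⟨fun x ⟨hx₀, hx₁⟩ ↦ ?_, fun y₁ y₂ ↦ add_rpow_sub_rpow_sub_rpow_le hs.le⟩
  have h := add_rpow_sub_rpow_sub_rpow_le hs.le hx₀ hx₁
  rw [one_rpow, one_rpow, mul_one, one_mul, add_comm x 1] at h
  linarith
end

section
/- For any integer n ≥ 2, real s > 1, and nonnegative reals y₁,…,y_n, define g_n^{(s)}(y₁,…,y_n) = (∑_{k=1}^n y_k)^s − ∑_{k=1}^n y_k^s. Then 0 ≤ g_n^{(s)}(y₁,…,y_n) ≤ 2^{s−1} s [ψ(y₁,y₂) + ∑_{k=2}^{n−1} γ_k ψ(y_{k+1}, Y_k)], where ψ(a,b) = a^{s−1} b + b^{s−1} a, Y_k = max(y₁,…,y_k), and γ_k = max(k, k^{s−1}). -/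
/-!
Superadditivity of `x ↦ x ^ s` gives the lower bound. For the upper bound, write
`g_{n+1}(y) = g_n(y) + g_2(y_{n+1}, ∑_{k ≤ n} y_k)`. The two-variable case follows from the
tangent-line bound `(a + b)^s - a^s ≤ s (a + b)^{s-1} b ≤ 2^{s-1} s a^{s-1} b` for `b ≤ a`, and
`∑_{k ≤ n} y_k ≤ n Y_n` turns `ψ(y_{n+1}, ∑_{k ≤ n} y_k)` into at most `γ_n ψ(y_{n+1}, Y_n)`.
-/

open Finset Real

namespace GnBounds

noncomputable def psi (s a b : ℝ) : ℝ := a ^ (s - 1) * b + b ^ (s - 1) * a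

lemma psi_comm (s a b : ℝ) : psi s a b = psi s b a := by
  unfold psi; ring

lemma psi_le_max_mul_psi {s : ℝ} (hs : 1 ≤ s) {c S M t : ℝ} (hc : 0 ≤ c) (hS : 0 ≤ S)
    (hM : 0 ≤ M) (ht : 0 ≤ t) (hSM : S ≤ t * M) :
    psi s c S ≤ max t (t ^ (s - 1)) * psi s c M := by
  have hSs : S ^ (s - 1) ≤ t ^ (s - 1) * M ^ (s - 1) := by
    rw [← mul_rpow ht hM]
    exact rpow_le_rpow hS hSM (by linarith)
  have h₁ : c ^ (s - 1) * S ≤ max t (t ^ (s - 1)) * (c ^ (s - 1) * M) :=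
    calc c ^ (s - 1) * S ≤ c ^ (s - 1) * (t * M) := by gcongr
      _ = t * (c ^ (s - 1) * M) := by ring
      _ ≤ _ := by gcongr; exact le_max_left _ _
  have h₂ : S ^ (s - 1) * c ≤ max t (t ^ (s - 1)) * (M ^ (s - 1) * c) :=
    calc S ^ (s - 1) * c ≤ t ^ (s - 1) * M ^ (s - 1) * c := by gcongr
      _ = t ^ (s - 1) * (M ^ (s - 1) * c) := by ring
      _ ≤ _ := by gcongr; exact le_max_right _ _
  unfold psi
  linarith

lemma rpow_sub_rpow_le_of_le {s : ℝ} (hs : 1 ≤ s) {a c : ℝ} (ha : 0 ≤ a) (hac : a ≤ c) :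
    c ^ s - a ^ s ≤ s * c ^ (s - 1) * (c - a) := by
  rcases hac.eq_or_lt with rfl | hlt
  · simp
  have hslope := (convexOn_rpow hs).slope_le_of_hasDerivAt ha (ha.trans hac) hlt
    (hasDerivAt_rpow_const (Or.inr hs))
  rwa [slope_def_field, div_le_iff₀ (sub_pos.2 hlt)] at hslope

lemma add_rpow_sub_rpow_sub_rpow_le_of_le {s : ℝ} (hs : 1 ≤ s) {a b : ℝ} (hb : 0 ≤ b)
    (hba : b ≤ a) :
    (a + b) ^ s - a ^ s - b ^ s ≤ 2 ^ (s - 1) * s * psi s a b := by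
  have ha : 0 ≤ a := hb.trans hba
  have htangent := rpow_sub_rpow_le_of_le hs ha (le_add_of_nonneg_right hb)
  have hpow : (a + b) ^ (s - 1) ≤ 2 ^ (s - 1) * a ^ (s - 1) := by
    rw [← mul_rpow zero_le_two ha]
    exact rpow_le_rpow (by positivity) (by linarith) (by linarith)
  have hmain : s * (a + b) ^ (s - 1) * b ≤ 2 ^ (s - 1) * s * (a ^ (s - 1) * b) :=
    calc s * (a + b) ^ (s - 1) * b ≤ s * (2 ^ (s - 1) * a ^ (s - 1)) * b := by gcongr
      _ = _ := by ring
  have hrest : 0 ≤ 2 ^ (s - 1) * s * (b ^ (s - 1) * a) := by positivity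
  have hbs : 0 ≤ b ^ s := rpow_nonneg hb s
  unfold psi
  rw [add_sub_cancel_left] at htangent
  linarith

lemma add_rpow_sub_rpow_sub_rpow_le {s : ℝ} (hs : 1 ≤ s) {a b : ℝ} (ha : 0 ≤ a) (hb : 0 ≤ b) :
    (a + b) ^ s - a ^ s - b ^ s ≤ 2 ^ (s - 1) * s * psi s a b := by
  rcases le_total b a with hba | hab
  · exact add_rpow_sub_rpow_sub_rpow_le_of_le hs hb hba
  · have := add_rpow_sub_rpow_sub_rpow_le_of_le hs ha hab
    rw [add_comm a, psi_comm]
    linarith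

lemma sum_rpow_le_rpow_sum {ι : Type*} {s : ℝ} (hs : 1 ≤ s) (t : Finset ι) {f : ι → ℝ}
    (hf : ∀ i ∈ t, 0 ≤ f i) :
    ∑ i ∈ t, f i ^ s ≤ (∑ i ∈ t, f i) ^ s := by
  classical
  induction t using Finset.induction_on with
  | empty => simp [zero_rpow (by linarith : s ≠ 0)]
  | insert i t hi ih =>
    rw [sum_insert hi, sum_insert hi]
    have hft : ∀ j ∈ t, 0 ≤ f j := fun j hj => hf j (mem_insert_of_mem hj)
    calc f i ^ s + ∑ j ∈ t, f j ^ s ≤ f i ^ s + (∑ j ∈ t, f j) ^ s := by gcongr; exact ih hft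
      _ ≤ _ := add_rpow_le_rpow_add (hf i (mem_insert_self i t)) (sum_nonneg hft) hs

lemma sum_le_card_mul_fold_max {ι : Type*} (t : Finset ι) (f : ι → ℝ) (b : ℝ) :
    ∑ i ∈ t, f i ≤ #t * t.fold max b f := by
  rw [← nsmul_eq_mul]
  exact sum_le_card_nsmul t f _ fun i hi => (le_fold_max _).2 (Or.inr ⟨i, hi, le_rfl⟩)

end GnBounds

open GnBounds in
theorem g_n_bounds (n : ℕ) (hn : 2 ≤ n) (s : ℝ) (hs : 1 < s)
    (y : ℕ → ℝ) (hy : ∀ k, 0 ≤ y k) :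
    0 ≤ (∑ k ∈ Finset.Icc 1 n, y k) ^ s - ∑ k ∈ Finset.Icc 1 n, y k ^ s ∧
    (∑ k ∈ Finset.Icc 1 n, y k) ^ s - ∑ k ∈ Finset.Icc 1 n, y k ^ s ≤
      2 ^ (s - 1) * s *
        ((y 1 ^ (s - 1) * y 2 + y 2 ^ (s - 1) * y 1) +
          ∑ k ∈ Finset.Icc 2 (n - 1),
            max (k : ℝ) ((k : ℝ) ^ (s - 1)) *
              (y (k + 1) ^ (s - 1) * ((Finset.Icc 1 k).fold max (y 1) y) +
                ((Finset.Icc 1 k).fold max (y 1) y) ^ (s - 1) * y (k + 1))) := by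
  refine ⟨sub_nonneg.2 (sum_rpow_le_rpow_sum hs.le _ fun k _ => hy k), ?_⟩
  induction n, hn using Nat.le_induction with
  | base =>
    simpa [psi, show Finset.Icc 1 2 = {1, 2} from rfl, sub_sub] using
      add_rpow_sub_rpow_sub_rpow_le hs.le (hy 1) (hy 2)
  | succ n hn ih =>
    set S := ∑ k ∈ Icc 1 n, y k
    set M := (Finset.Icc 1 n).fold max (y 1) y
    have hS : 0 ≤ S := sum_nonneg fun k _ => hy k
    have hM : 0 ≤ M := (le_fold_max _).2 (Or.inl (hy 1))
    have hSM : S ≤ n * M := by simpa using sum_le_card_mul_fold_max (Icc 1 n) y (y 1)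
    have hstep : (S + y (n + 1)) ^ s - S ^ s - y (n + 1) ^ s ≤
        2 ^ (s - 1) * s * (max (n : ℝ) ((n : ℝ) ^ (s - 1)) * psi s (y (n + 1)) M) :=
      calc _ ≤ 2 ^ (s - 1) * s * psi s (y (n + 1)) S := by
            rw [psi_comm]; exact add_rpow_sub_rpow_sub_rpow_le hs.le hS (hy (n + 1))
        _ ≤ _ := by
            gcongr; exact psi_le_max_mul_psi hs.le (hy (n + 1)) hS hM n.cast_nonneg hSM
    rw [sum_Icc_succ_top (show 1 ≤ n + 1 by omega) y,
      sum_Icc_succ_top (show 1 ≤ n + 1 by omega) (fun k => y k ^ s)]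
    obtain ⟨m, rfl⟩ : ∃ m, n = m + 1 := ⟨n - 1, by omega⟩
    rw [Nat.add_sub_cancel, sum_Icc_succ_top (show 2 ≤ m + 1 by omega)]
    simp only [psi, Nat.add_sub_cancel] at hstep ih ⊢
    push_cast at hstep ⊢
    linarith
end
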